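/- arXiv:1703.02939 — 2 statements merged into one kernel-verified Lean document; each statement's English description precedes it below -/
import Mathlib

section
/- Let p ≥ q ≥ 2 and d ≥ 1 be integers and let H be a finite family of d-intervals with |H| ≥ p. If H satisfies the (p,q) property, then the fractional covering number satisfies τ*(H) ≤ max{ (2^{1/(q-1)} · (e·p)^{q/(q-1)} / q) · d^{1/(q-1)} + 1 , 2·p² }. -/
/-- A `d`-interval: a nonempty subset of `ℝ` that is a union of at most `d`
closed bounded intervals. -/
def IsDInterval (d : ℕ) (s : Set ℝ) : Prop :=
  s.Nonempty ∧ ∃ P : Finset (ℝ × ℝ), P.card ≤ d ∧ s = ⋃ I ∈ P, Set.Icc I.1 I.2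

/-- A finite family `H` of sets satisfies the `(p,q)` property if among every
`p` distinct members of `H` some `q` have a point in common. -/
def HasPQProperty (H : Finset (Set ℝ)) (p q : ℕ) : Prop :=
  ∀ S ⊆ H, S.card = p → ∃ T ⊆ S, T.card = q ∧ (⋂ h ∈ T, (h : Set ℝ)).Nonempty

/-- The covering number `τ(H)`: the minimum cardinality of a finite set of
points meeting every member of `H`. -/
noncomputable def coverNum (H : Finset (Set ℝ)) : ℕ :=
  sInf { n : ℕ | ∃ C : Finset ℝ, C.card = n ∧ ∀ h ∈ H, ∃ x ∈ C, x ∈ h }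

/-- The fractional covering number `τ*(H)`: the infimum of total weights of
finitely supported fractional covers of `H`. -/
noncomputable def fracCoverNum (H : Finset (Set ℝ)) : ℝ :=
  sInf { t : ℝ | ∃ w : ℝ →₀ ℝ, (∀ x, 0 ≤ w x) ∧
    (∀ h ∈ H, 1 ≤ ∑ x ∈ w.support, Set.indicator h (fun y => w y) x) ∧
    t = ∑ x ∈ w.support, w x }

/-!
By von Neumann's minimax theorem, applied to the incidence matrix between the members of `H`
and a finite set `X` of points, `τ*(H) ≤ B` as soon as every probability distribution `ρ` on
`H` has a point of `X` of depth at least `1 / B`, the depth of `x` being the `ρ`-weight of the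
members containing `x`. Take for `X` the left endpoints of the intervals making up the members,
let `β` be the largest depth of a point of `X`, and draw `p` members independently according
to `ρ`. Two draws coincide with probability at most `p² ∑ ρ(h)² ≤ p² β`. Otherwise the draws
are `p` distinct members, so `q` of them share a point `y`; among the intervals of these members
that contain `y`, the one with the largest left endpoint has that endpoint in all `q` members.
A union bound over the `q`-set, the distinguished member and its at most `d` left endpoints
bounds the probability of this by `C(p,q) q d β^(q-1)`. One of the two bounds is at least `1/2`,
and `C(p,q) q^q ≤ (e p)^q` turns this into `β ≥ 1 / max(A, 2p²)`, where `A + 1` is the first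
entry of the maximum in the theorem.
-/

open Finset Function Matrix

theorem Matrix.exists_mem_stdSimplex_forall_le_mulVec {ι κ : Type*} [Fintype ι] [Fintype κ]
    [Nonempty ι] (M : Matrix ι κ ℝ) {c : ℝ} (h : ∀ ρ ∈ stdSimplex ℝ ι, ∃ x, c ≤ (ρ ᵥ* M) x) :
    ∃ σ ∈ stdSimplex ℝ κ, ∀ i, c ≤ (M *ᵥ σ) i := by
  classical
  obtain ⟨i₀⟩ := ‹Nonempty ι›
  obtain ⟨x₀, -⟩ := h _ (single_mem_stdSimplex ℝ i₀)
  obtain ⟨ρ, hρ, σ, hσ, hsaddle⟩ := Sion.exists_isSaddlePointOn (f := fun ρ σ => ρ ⬝ᵥ (M *ᵥ σ))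
    ⟨_, single_mem_stdSimplex ℝ i₀⟩ (convex_stdSimplex ℝ ι) (isCompact_stdSimplex ℝ ι)
    (fun σ _ => (continuous_id.dotProduct continuous_const).lowerSemicontinuous
      |>.lowerSemicontinuousOn _)
    (fun σ _ => (LinearMap.convexOn ((dotProductBilin ℝ ℝ).flip (M *ᵥ σ))
      (convex_stdSimplex ℝ ι)).quasiconvexOn)
    (convex_stdSimplex ℝ κ) ⟨_, single_mem_stdSimplex ℝ x₀⟩ (isCompact_stdSimplex ℝ κ)
    (fun ρ _ => (continuous_const.dotProduct (continuous_const.matrix_mulVec continuous_id))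
      |>.upperSemicontinuous.upperSemicontinuousOn _)
    (fun ρ _ => (LinearMap.concaveOn (dotProductBilin ℝ ℝ ρ ∘ₗ M.mulVecLin)
      (convex_stdSimplex ℝ κ)).quasiconcaveOn)
  refine ⟨σ, hσ, fun i => ?_⟩
  obtain ⟨x, hx⟩ := h ρ hρ
  calc c ≤ (ρ ᵥ* M) x := hx
    _ = ρ ⬝ᵥ (M *ᵥ Pi.single x 1) := by rw [mulVec_single_one]; rfl
    _ ≤ Pi.single i 1 ⬝ᵥ (M *ᵥ σ) :=
      hsaddle _ (single_mem_stdSimplex ℝ i) _ (single_mem_stdSimplex ℝ x)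
    _ = (M *ᵥ σ) i := single_one_dotProduct i _

theorem fracCoverNum_le {H : Finset (Set ℝ)} (w : ℝ →₀ ℝ) (hw : ∀ x, 0 ≤ w x)
    (hcov : ∀ h ∈ H, 1 ≤ ∑ x ∈ w.support, Set.indicator h (fun y => w y) x) :
    fracCoverNum H ≤ ∑ x ∈ w.support, w x :=
  csInf_le ⟨0, by rintro _ ⟨w, hw, -, rfl⟩; exact sum_nonneg fun x _ => hw x⟩ ⟨w, hw, hcov, rfl⟩

open Classical in
theorem fracCoverNum_le_sum {H : Finset (Set ℝ)} {κ : Type*} [Fintype κ] (pt : κ → ℝ)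
    (g : κ → ℝ) (hg : ∀ k, 0 ≤ g k) (hcov : ∀ h ∈ H, 1 ≤ ∑ k with pt k ∈ h, g k) :
    fracCoverNum H ≤ ∑ k, g k := by
  set w : ℝ →₀ ℝ := ∑ k, Finsupp.single (pt k) (g k)
  have hsum : ∀ φ : ℝ → ℝ → ℝ, (∀ x, φ x 0 = 0) → (∀ x u v, φ x (u + v) = φ x u + φ x v) →
      ∑ x ∈ w.support, φ x (w x) = ∑ k, φ (pt k) (g k) := fun φ h0 hadd => by
    rw [← Finsupp.sum, ← Finsupp.sum_finsetSum_index h0 hadd]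
    exact sum_congr rfl fun k _ => Finsupp.sum_single_index (h0 _)
  have hw : ∀ x, 0 ≤ w x := fun x => by
    rw [Finsupp.finsetSum_apply]
    exact sum_nonneg fun k _ => by rw [Finsupp.single_apply]; split_ifs <;> simp [hg]
  have hcov' : ∀ h ∈ H, 1 ≤ ∑ x ∈ w.support, Set.indicator h (fun y => w y) x := fun h hh => by
    simp only [Set.indicator_apply]
    rw [hsum (fun x v => if x ∈ h then v else 0) (fun _ => ite_self 0)
      (fun x _ _ => by split_ifs <;> simp), ← sum_filter]
    exact hcov h hh
  exact (fracCoverNum_le w hw hcov').trans_eq (hsum (fun _ v => v) (fun _ => rfl) fun _ _ _ => rfl)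

section Depth

variable {α γ : Type*} [Fintype α] {ρ : α → ℝ} {s : α → Set γ}

open Classical in
noncomputable def depth (ρ : α → ℝ) (s : α → Set γ) (x : γ) : ℝ := ∑ a with x ∈ s a, ρ a

theorem nonempty_of_mem_stdSimplex (hρ : ρ ∈ stdSimplex ℝ α) : Nonempty α := by
  by_contra h
  rw [not_nonempty_iff] at h
  rwa [stdSimplex_of_isEmpty_index] at hρ

theorem depth_nonneg (hρ : ρ ∈ stdSimplex ℝ α) (x : γ) : 0 ≤ depth ρ s x :=
  sum_nonneg fun a _ => hρ.1 a

open Classical in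
theorem le_depth (hρ : ρ ∈ stdSimplex ℝ α) {a : α} {x : γ} (hx : x ∈ s a) :
    ρ a ≤ depth ρ s x :=
  single_le_sum (fun b _ => hρ.1 b) (mem_filter.2 ⟨mem_univ a, hx⟩)

end Depth

open Classical in
theorem fracCoverNum_le_of_forall_exists_one_le_mul_depth {H : Finset (Set ℝ)} (X : Finset ℝ)
    {B : ℝ} (hB : 0 < B)
    (h : ∀ ρ ∈ stdSimplex ℝ H, ∃ x ∈ X, 1 ≤ B * depth ρ (fun s : H => (s : Set ℝ)) x) :
    fracCoverNum H ≤ B := by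
  rcases isEmpty_or_nonempty H with hH | hH
  · refine (fracCoverNum_le 0 (fun _ => le_rfl) fun s hs => (hH.false ⟨s, hs⟩).elim).trans ?_
    simpa using hB.le
  set M : Matrix H X ℝ := fun s x => if (x : ℝ) ∈ (s : Set ℝ) then 1 else 0
  obtain ⟨σ, hσ, hcov⟩ := M.exists_mem_stdSimplex_forall_le_mulVec (c := B⁻¹) fun ρ hρ => by
    obtain ⟨x, hx, hρx⟩ := h ρ hρ
    refine ⟨⟨x, hx⟩, (inv_le_iff_one_le_mul₀' hB).2 (hρx.trans_eq ?_)⟩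
    simp [M, depth, vecMul, dotProduct, sum_filter]
  calc fracCoverNum H ≤ ∑ x : X, B * σ x :=
        fracCoverNum_le_sum (↑) _ (fun x => mul_nonneg hB.le (hσ.1 x)) fun s hs => by
          rw [← mul_sum]
          refine (inv_le_iff_one_le_mul₀' hB).1 ((hcov ⟨s, hs⟩).trans_eq ?_)
          simp [M, mulVec, dotProduct, sum_filter]
    _ = B := by rw [← mul_sum, hσ.2, mul_one]

section ProductWeights

variable {ι α : Type*} [Fintype ι] {ρ : α → ℝ}

theorem sum_prod_le_sum_prod_sum_of_forall_exists_mem_piFinset [DecidableEq ι] {κ : Type*}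
    (hρ : ∀ a, 0 ≤ ρ a) {E : Finset (ι → α)} {K : Finset κ} {t : κ → ι → Finset α}
    (hE : ∀ f ∈ E, ∃ k ∈ K, f ∈ Fintype.piFinset (t k)) :
    ∑ f ∈ E, ∏ i, ρ (f i) ≤ ∑ k ∈ K, ∏ i, ∑ a ∈ t k i, ρ a := by
  classical
  have hw : ∀ f : ι → α, 0 ≤ ∏ i, ρ (f i) := fun f => prod_nonneg fun i _ => hρ (f i)
  calc ∑ f ∈ E, ∏ i, ρ (f i)
      ≤ ∑ f ∈ E, ∑ k ∈ K, if f ∈ Fintype.piFinset (t k) then ∏ i, ρ (f i) else 0 := by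
        refine sum_le_sum fun f hf => ?_
        obtain ⟨k, hk, hfk⟩ := hE f hf
        refine le_of_eq_of_le (if_pos hfk).symm
          (single_le_sum (f := fun k => if f ∈ Fintype.piFinset (t k) then _ else 0)
            (fun k _ => ?_) hk)
        split_ifs <;> simp [hw]
    _ = ∑ k ∈ K, ∑ f ∈ E with f ∈ Fintype.piFinset (t k), ∏ i, ρ (f i) := by
        rw [sum_comm]; simp only [sum_filter]
    _ ≤ ∑ k ∈ K, ∑ f ∈ Fintype.piFinset (t k), ∏ i, ρ (f i) :=
        sum_le_sum fun k _ => sum_le_sum_of_subset_of_nonneg (fun f hf => (mem_filter.1 hf).2)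
          fun f _ _ => hw f
    _ = ∑ k ∈ K, ∏ i, ∑ a ∈ t k i, ρ a := by simp only [prod_univ_sum]

variable [Fintype α]

theorem prod_sum_ite_mem_univ [DecidableEq ι] (hρ : ∑ a, ρ a = 1) (Q : Finset ι)
    (u : ι → Finset α) :
    ∏ i, ∑ a ∈ (if i ∈ Q then u i else univ), ρ a = ∏ i ∈ Q, ∑ a ∈ u i, ρ a := by
  simp only [apply_ite (fun t : Finset α => ∑ a ∈ t, ρ a), hρ, prod_ite_mem, univ_inter]

theorem sum_prod_le_of_forall_not_injective (hρ : ρ ∈ stdSimplex ℝ α) {E : Finset (ι → α)}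
    (hE : ∀ f ∈ E, ¬ Injective f) :
    ∑ f ∈ E, ∏ i, ρ (f i) ≤ Fintype.card ι ^ 2 * ∑ a, ρ a ^ 2 := by
  classical
  calc ∑ f ∈ E, ∏ i, ρ (f i)
      ≤ ∑ k ∈ univ.offDiag ×ˢ (univ : Finset α),
          ∏ i, ∑ a ∈ (if i ∈ ({k.1.1, k.1.2} : Finset ι) then {k.2} else univ), ρ a := by
        refine sum_prod_le_sum_prod_sum_of_forall_exists_mem_piFinset hρ.1 fun f hf => ?_
        obtain ⟨i, j, hfij, hij⟩ := not_injective_iff.1 (hE f hf)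
        refine ⟨((i, j), f i), by simp [hij], Fintype.mem_piFinset.2 fun k => ?_⟩
        split_ifs with hk
        · rcases mem_insert.1 hk with rfl | hk
          · simp
          · simp [mem_singleton.1 hk, hfij]
        · exact mem_univ _
    _ = ∑ ij ∈ (univ.offDiag : Finset (ι × ι)), ∑ a, ρ a ^ 2 := by
        rw [sum_product]
        refine sum_congr rfl fun ij hij => sum_congr rfl fun a _ => ?_
        rw [prod_sum_ite_mem_univ hρ.2, prod_const, sum_singleton,
          card_pair (mem_offDiag.1 hij).2.2]
    _ ≤ Fintype.card ι ^ 2 * ∑ a, ρ a ^ 2 := by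
        rw [sum_const, nsmul_eq_mul, offDiag_card, card_univ]
        gcongr
        exact_mod_cast (Nat.sub_le _ _).trans (sq _).ge

end ProductWeights

theorem choose_mul_pow_self_le (p q : ℕ) : (p.choose q : ℝ) * q ^ q ≤ (Real.exp 1 * p) ^ q :=
  calc (p.choose q : ℝ) * q ^ q ≤ p ^ q / q.factorial * q ^ q := by
        gcongr; exact Nat.choose_le_pow_div q p
    _ = p ^ q * (q ^ q / q.factorial) := by ring
    _ ≤ p ^ q * Real.exp q := by gcongr; exact Real.pow_div_factorial_le_exp _ q.cast_nonneg q
    _ = (Real.exp 1 * p) ^ q := by rw [mul_pow, ← Real.exp_one_pow, mul_comm]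

theorem one_le_mul_of_one_le_choose_mul_pow {p q d : ℕ} (hq : 2 ≤ q) {β : ℝ} (hβ : 0 ≤ β)
    (h : 1 ≤ 2 * p.choose q * q * d * β ^ (q - 1)) :
    1 ≤ β * ((2 : ℝ) ^ (1 / ((q : ℝ) - 1)) * (Real.exp 1 * p) ^ ((q : ℝ) / ((q : ℝ) - 1)) / q
      * (d : ℝ) ^ (1 / ((q : ℝ) - 1))) := by
  have hn : q - 1 ≠ 0 := by omega
  have hq1 : (q : ℝ) - 1 = (q - 1 : ℕ) := by rw [Nat.cast_sub (by omega), Nat.cast_one]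
  rw [hq1, one_div]
  set n := q - 1
  set E := Real.exp 1 * p
  have hroot : ∀ x : ℝ, 0 ≤ x → (x ^ (n⁻¹ : ℝ)) ^ n = x := fun x hx =>
    Real.rpow_inv_natCast_pow hx hn
  set A := (2 : ℝ) ^ (n⁻¹ : ℝ) * E ^ ((q : ℝ) / n) / q * (d : ℝ) ^ (n⁻¹ : ℝ) with hA
  have hAn : A ^ n = 2 * E ^ q * d / q ^ n := by
    rw [hA, div_eq_mul_inv (q : ℝ), Real.rpow_mul (by positivity), Real.rpow_natCast, mul_pow,
      div_pow, mul_pow, hroot _ zero_le_two, hroot _ (by positivity), hroot _ d.cast_nonneg]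
    ring
  have hle : 2 * p.choose q * q * d ≤ A ^ n := by
    rw [hAn, le_div_iff₀ (by positivity)]
    have hqn : (q : ℝ) * q ^ n = q ^ q := by rw [← pow_succ']; congr 1; omega
    calc (2 * p.choose q * q * d * q ^ n : ℝ) = 2 * (p.choose q * q ^ q) * d := by
          rw [← hqn]; ring
      _ ≤ 2 * E ^ q * d := by gcongr; exact choose_mul_pow_self_le p q
  have : 1 ≤ (β * A) ^ n := by
    rw [mul_pow]
    calc 1 ≤ 2 * p.choose q * q * d * β ^ n := h
      _ ≤ A ^ n * β ^ n := by gcongr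
      _ = β ^ n * A ^ n := mul_comm _ _
  exact (one_le_pow_iff_of_nonneg (by positivity) hn).1 this

section Anchored

open Classical

variable {α γ : Type*} [Fintype α] {ρ : α → ℝ} {s : α → Set γ} {L : α → Finset γ} {p q : ℕ}

def HasAnchoredPQProperty (s : α → Set γ) (L : α → Finset γ) (p q : ℕ) : Prop :=
  ∀ f : Fin p → α, Injective f →
    ∃ Q : Finset (Fin p), #Q = q ∧ ∃ j ∈ Q, ∃ x ∈ L (f j), ∀ i ∈ Q, x ∈ s (f i)

theorem HasAnchoredPQProperty.sum_prod_le_of_forall_injective (h : HasAnchoredPQProperty s L p q)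
    (hρ : ρ ∈ stdSimplex ℝ α) {E : Finset (Fin p → α)} (hE : ∀ f ∈ E, Injective f) :
    ∑ f ∈ E, ∏ i, ρ (f i) ≤
      p.choose q * q * ∑ x ∈ univ.biUnion L, (∑ a with x ∈ L a, ρ a) * depth ρ s x ^ (q - 1) := by
  set X := univ.biUnion L
  -- Box `((Q, j), x)`: draw `j` has `x` in `L`, the other draws in `Q` contain `x`.
  calc ∑ f ∈ E, ∏ i, ρ (f i)
      ≤ ∑ k ∈ (powersetCard q univ).sigma id ×ˢ X, ∏ i, ∑ a ∈ (if i ∈ k.1.1 then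
          (if i = k.1.2 then univ.filter (k.2 ∈ L ·) else univ.filter (k.2 ∈ s ·)) else univ),
            ρ a := by
        refine sum_prod_le_sum_prod_sum_of_forall_exists_mem_piFinset hρ.1 fun f hf => ?_
        obtain ⟨Q, hQ, j, hj, x, hx, hall⟩ := h f (hE f hf)
        refine ⟨(⟨Q, j⟩, x), ?_, Fintype.mem_piFinset.2 fun i => ?_⟩
        · simp only [mem_product, mem_sigma, mem_powersetCard, id]
          exact ⟨⟨⟨subset_univ Q, hQ⟩, hj⟩, mem_biUnion.2 ⟨f j, mem_univ _, hx⟩⟩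
        · split_ifs with hiQ hij
          · subst hij; simpa using hx
          · simpa using hall i hiQ
          · exact mem_univ _
    _ = ∑ k ∈ (powersetCard q univ).sigma id ×ˢ X,
          (∑ a with k.2 ∈ L a, ρ a) * depth ρ s k.2 ^ (q - 1) := by
        refine sum_congr rfl fun ⟨⟨Q, j⟩, x⟩ hk => ?_
        simp only [mem_product, mem_sigma, mem_powersetCard, id] at hk
        obtain ⟨⟨⟨-, hQ⟩, hj⟩, -⟩ := hk
        rw [prod_sum_ite_mem_univ hρ.2, ← mul_prod_erase Q _ hj, if_pos rfl,
          prod_congr rfl fun i hi => by rw [if_neg (ne_of_mem_erase hi)], prod_const,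
          card_erase_of_mem hj, hQ]
        rfl
    _ = p.choose q * q * ∑ x ∈ X, (∑ a with x ∈ L a, ρ a) * depth ρ s x ^ (q - 1) := by
        rw [sum_product, sum_sigma]
        simp only [id, sum_const, nsmul_eq_mul]
        rw [sum_congr rfl fun Q hQ => by rw [(mem_powersetCard.1 hQ).2], sum_const,
          card_powersetCard, card_univ, Fintype.card_fin, nsmul_eq_mul]
        ring

theorem sum_anchored_weight_mul_pow_le (hρ : ρ ∈ stdSimplex ℝ α) {d : ℕ}
    (hLcard : ∀ a, #(L a) ≤ d) {β : ℝ} (hβ0 : 0 ≤ β)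
    (hβ : ∀ x ∈ univ.biUnion L, depth ρ s x ≤ β) (n : ℕ) :
    ∑ x ∈ univ.biUnion L, (∑ a with x ∈ L a, ρ a) * depth ρ s x ^ n ≤ d * β ^ n := calc
  _ ≤ ∑ x ∈ univ.biUnion L, (∑ a with x ∈ L a, ρ a) * β ^ n := sum_le_sum fun x hx => by
    gcongr
    · exact sum_nonneg fun a _ => hρ.1 a
    · exact depth_nonneg hρ x
    · exact hβ x hx
  _ = (∑ a, #(L a) * ρ a) * β ^ n := by
    rw [← sum_mul, sum_comm' (t' := univ) (s' := L) fun x a => by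
      simp only [mem_biUnion, mem_univ, true_and, mem_filter, and_true]
      exact ⟨fun h => h.2, fun h => ⟨⟨a, h⟩, h⟩⟩]
    simp only [sum_const, nsmul_eq_mul]
  _ ≤ d * β ^ n := by
    gcongr ?_ * _
    calc ∑ a, #(L a) * ρ a ≤ ∑ a, d * ρ a := sum_le_sum fun a _ => by
          gcongr
          · exact hρ.1 a
          · exact_mod_cast hLcard a
      _ = d := by rw [← mul_sum, hρ.2, mul_one]

theorem HasAnchoredPQProperty.one_le_sq_mul_or_one_le_choose_mul
    (h : HasAnchoredPQProperty s L p q) (hρ : ρ ∈ stdSimplex ℝ α) {d : ℕ}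
    (hLcard : ∀ a, #(L a) ≤ d) (hLs : ∀ a, ∃ x ∈ L a, x ∈ s a) {β : ℝ}
    (hβ : ∀ x ∈ univ.biUnion L, depth ρ s x ≤ β) :
    1 ≤ 2 * p ^ 2 * β ∨ 1 ≤ 2 * p.choose q * q * d * β ^ (q - 1) := by
  have hρβ : ∀ a, ρ a ≤ β := fun a => by
    obtain ⟨x, hxL, hxs⟩ := hLs a
    exact (le_depth hρ hxs).trans (hβ x (mem_biUnion.2 ⟨a, mem_univ a, hxL⟩))
  have hβ0 : 0 ≤ β :=
    let ⟨a⟩ := nonempty_of_mem_stdSimplex hρ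
    (hρ.1 a).trans (hρβ a)
  have hsq : ∑ a, ρ a ^ 2 ≤ β := calc
    ∑ a, ρ a ^ 2 ≤ ∑ a, ρ a * β := sum_le_sum fun a _ => by
      rw [sq]; exact mul_le_mul_of_nonneg_left (hρβ a) (hρ.1 a)
    _ = β := by rw [← sum_mul, hρ.2, one_mul]
  have hcoll : ∑ f : Fin p → α with ¬ Injective f, ∏ i, ρ (f i) ≤ p ^ 2 * β := by
    refine (sum_prod_le_of_forall_not_injective hρ fun f hf => (mem_filter.1 hf).2).trans ?_
    rw [Fintype.card_fin]
    gcongr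
  have hinj : ∑ f : Fin p → α with Injective f, ∏ i, ρ (f i) ≤
      p.choose q * q * (d * β ^ (q - 1)) := by
    refine (h.sum_prod_le_of_forall_injective hρ fun f hf => (mem_filter.1 hf).2).trans ?_
    gcongr
    exact sum_anchored_weight_mul_pow_le hρ hLcard hβ0 hβ (q - 1)
  have htotal : ∑ f : Fin p → α, ∏ i, ρ (f i) = 1 := by
    rw [← Fintype.sum_pow, hρ.2, one_pow]
  rw [← sum_filter_add_sum_filter_not univ Injective] at htotal
  by_contra! hcon
  linarith [hcon.1, hcon.2]

theorem HasAnchoredPQProperty.exists_one_le_mul_depth (h : HasAnchoredPQProperty s L p q)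
    (hq : 2 ≤ q) {d : ℕ} (hρ : ρ ∈ stdSimplex ℝ α) (hLcard : ∀ a, #(L a) ≤ d)
    (hLs : ∀ a, ∃ x ∈ L a, x ∈ s a) :
    ∃ x ∈ univ.biUnion L, 1 ≤ max
      ((2 : ℝ) ^ (1 / ((q : ℝ) - 1)) * (Real.exp 1 * p) ^ ((q : ℝ) / ((q : ℝ) - 1)) / q
        * (d : ℝ) ^ (1 / ((q : ℝ) - 1))) (2 * (p : ℝ) ^ 2) * depth ρ s x := by
  obtain ⟨a⟩ := nonempty_of_mem_stdSimplex hρ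
  obtain ⟨y, hy, -⟩ := hLs a
  obtain ⟨x, hx, hmax⟩ :=
    exists_max_image _ (depth ρ s) ⟨y, mem_biUnion.2 ⟨a, mem_univ a, hy⟩⟩
  refine ⟨x, hx, ?_⟩
  have hx0 := depth_nonneg (s := s) hρ x
  rcases h.one_le_sq_mul_or_one_le_choose_mul hρ hLcard hLs hmax with h | h
  · calc 1 ≤ 2 * p ^ 2 * depth ρ s x := h
      _ ≤ _ := mul_le_mul_of_nonneg_right (le_max_right _ _) hx0
  · calc 1 ≤ depth ρ s x * _ := one_le_mul_of_one_le_choose_mul_pow hq hx0 h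
      _ ≤ _ := by rw [mul_comm]; exact mul_le_mul_of_nonneg_right (le_max_left _ _) hx0

end Anchored

-- For a union of closed intervals, `L` can be taken to be the set of their left endpoints.
def IsLeftEndSet (L : Finset ℝ) (s : Set ℝ) : Prop :=
  ∀ y ∈ s, ∃ x ∈ L, x ≤ y ∧ Set.Icc x y ⊆ s

theorem IsDInterval.exists_isLeftEndSet {d : ℕ} {s : Set ℝ} (h : IsDInterval d s) :
    ∃ L : Finset ℝ, #L ≤ d ∧ IsLeftEndSet L s := by
  classical
  obtain ⟨-, P, hP, rfl⟩ := h
  refine ⟨P.image Prod.fst, card_image_le.trans hP, fun y hy => ?_⟩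
  obtain ⟨I, hI, hyI⟩ := Set.mem_iUnion₂.1 hy
  exact ⟨I.1, mem_image_of_mem _ hI, hyI.1,
    fun z hz => Set.mem_iUnion₂.2 ⟨I, hI, hz.1, hz.2.trans hyI.2⟩⟩

theorem IsLeftEndSet.exists_mem {L : Finset ℝ} {s : Set ℝ} (h : IsLeftEndSet L s)
    (hs : s.Nonempty) : ∃ x ∈ L, x ∈ s :=
  let ⟨_, hy⟩ := hs
  let ⟨x, hx, hxy, hsub⟩ := h _ hy
  ⟨x, hx, hsub ⟨le_rfl, hxy⟩⟩

theorem exists_mem_isLeftEndSet_forall_mem {ι : Type*} {Q : Finset ι} (hQ : Q.Nonempty)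
    {s : ι → Set ℝ} {L : ι → Finset ℝ} (hL : ∀ i ∈ Q, IsLeftEndSet (L i) (s i)) {y : ℝ}
    (hy : ∀ i ∈ Q, y ∈ s i) : ∃ j ∈ Q, ∃ x ∈ L j, ∀ i ∈ Q, x ∈ s i := by
  choose! g hgL hgy hgs using fun i hi => hL i hi y (hy i hi)
  obtain ⟨j, hj, hmax⟩ := Q.exists_max_image g hQ
  exact ⟨j, hj, g j, hgL j hj, fun i hi => hgs i hi ⟨hmax i hi, hgy j hj⟩⟩

theorem HasPQProperty.pos {H : Finset (Set ℝ)} {p q : ℕ} (h : HasPQProperty H p q)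
    (hq : 0 < q) : 0 < p := by
  by_contra! hp
  obtain ⟨T, hT, hTq, -⟩ := h ∅ (empty_subset H) (by rw [card_empty]; omega)
  rw [subset_empty.1 hT, card_empty] at hTq
  omega

theorem HasPQProperty.exists_card_eq_of_injective {H : Finset (Set ℝ)} {p q : ℕ}
    (h : HasPQProperty H p q) {f : Fin p → Set ℝ} (hf : Injective f) (hfH : ∀ i, f i ∈ H) :
    ∃ Q : Finset (Fin p), #Q = q ∧ ∃ y, ∀ i ∈ Q, y ∈ f i := by
  classical
  obtain ⟨T, hTS, hT, y, hy⟩ := h (univ.image f)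
    (fun _ hs => let ⟨i, _, hi⟩ := mem_image.1 hs; hi ▸ hfH i)
    (by rw [card_image_of_injective _ hf, card_fin])
  refine ⟨({i | f i ∈ T} : Finset (Fin p)), ?_, y,
    fun i hi => Set.mem_iInter₂.1 hy _ (mem_filter.1 hi).2⟩
  rw [← hT, ← card_image_of_injective _ hf]
  congr 1
  ext t
  simp only [mem_image, mem_filter, mem_univ, true_and]
  refine ⟨fun ⟨i, hi, hit⟩ => hit ▸ hi, fun ht => ?_⟩
  obtain ⟨i, -, rfl⟩ := mem_image.1 (hTS ht)
  exact ⟨i, ht, rfl⟩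

theorem HasPQProperty.hasAnchoredPQProperty {H : Finset (Set ℝ)} {p q : ℕ}
    (h : HasPQProperty H p q) (hq : 0 < q) {L : H → Finset ℝ} (hL : ∀ s, IsLeftEndSet (L s) s) :
    HasAnchoredPQProperty (fun s : H => (s : Set ℝ)) L p q := fun f hf =>
  let ⟨Q, hQ, _, hy⟩ :=
    h.exists_card_eq_of_injective (Subtype.val_injective.comp hf) fun i => (f i).2
  ⟨Q, hQ, exists_mem_isLeftEndSet_forall_mem (card_pos.1 (hQ ▸ hq)) (fun i _ => hL (f i)) hy⟩

theorem fracCover_of_pq_property_general (p q d : ℕ) (hq : 2 ≤ q)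
    (H : Finset (Set ℝ)) (hH : ∀ s ∈ H, IsDInterval d s)
    (hprop : HasPQProperty H p q) :
    fracCoverNum H ≤ max
      ((2 : ℝ) ^ (1 / ((q : ℝ) - 1)) * (Real.exp 1 * p) ^ ((q : ℝ) / ((q : ℝ) - 1)) / q
        * (d : ℝ) ^ (1 / ((q : ℝ) - 1)) + 1)
      (2 * (p : ℝ) ^ 2) := by
  choose L hLcard hL using fun s : H => (hH s s.2).exists_isLeftEndSet
  have hanchored := hprop.hasAnchoredPQProperty (by omega) hL
  have hp : (0 : ℝ) < p := Nat.cast_pos.2 (hprop.pos (by omega))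
  have hB := lt_max_of_lt_right (b := (2 : ℝ) ^ (1 / ((q : ℝ) - 1)) *
    (Real.exp 1 * p) ^ ((q : ℝ) / ((q : ℝ) - 1)) / q * (d : ℝ) ^ (1 / ((q : ℝ) - 1)))
    (by positivity : (0 : ℝ) < 2 * (p : ℝ) ^ 2)
  calc fracCoverNum H ≤ _ := fracCoverNum_le_of_forall_exists_one_le_mul_depth _ hB fun ρ hρ =>
        hanchored.exists_one_le_mul_depth hq hρ hLcard fun s => (hL s).exists_mem (hH s s.2).1
    _ ≤ _ := max_le_max (le_add_of_nonneg_right zero_le_one) le_rfl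

theorem fracCover_of_pq_property (p q d : ℕ) (hq : 2 ≤ q) (hqp : q ≤ p) (hd : 1 ≤ d)
    (H : Finset (Set ℝ)) (hH : ∀ s ∈ H, IsDInterval d s) (hcard : p ≤ H.card)
    (hprop : HasPQProperty H p q) :
    fracCoverNum H ≤ max
      ((2 : ℝ) ^ (1 / ((q : ℝ) - 1)) * (Real.exp 1 * p) ^ ((q : ℝ) / ((q : ℝ) - 1)) / q
        * (d : ℝ) ^ (1 / ((q : ℝ) - 1)) + 1)
      (2 * (p : ℝ) ^ 2) :=
  fracCover_of_pq_property_general p q d hq H hH hprop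
end

section
/- Let G be a finite tree, let p ≥ 2 and d ≥ 1 be integers, and let H be a finite family of nonempty subsets of the vertex set of G, each inducing a subgraph of G with at most d connected components, with |H| ≥ p. If H satisfies the (p,p) property, then the fractional covering number satisfies τ*(H) < (p·d)^{1/(p-1)} + 1. -/
/-!
Root the tree at `r`. Every component of a member `h` has a unique vertex nearest to `r`, its top,
and for `v ∈ h` the final segment of the `r`–`v` path inside `h` runs from the top of the
component of `v` down to `v`. So `h` has at most `d` tops, and among members of `H` sharing a
vertex `v` the top nearest to `v` lies in all of them. By the `(p,p)` property any `p`-tuple of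
members (with repetitions) shares a vertex, so for a fractional matching `y` every term of the
expansion of `(∑ y)^p` can be charged to a pair (position, common top); summing gives
`(∑ y)^p ≤ p d ∑ y`, hence `ν* ≤ (pd)^(1/(p-1))`. Finally `τ* ≤ ν*` by LP duality, obtained by
separating the image of the standard simplex under the incidence map from the orthant
`{u | ∀ h, 1/x ≤ u h}`.
-/

/-- A finite family `H` of vertex sets satisfies the `(p,q)` property if among
every `p` distinct members of `H` some `q` have a vertex in common. -/
def VertexPQProperty {V : Type*} (H : Finset (Set V)) (p q : ℕ) : Prop :=
  ∀ S ⊆ H, S.card = p → ∃ T ⊆ S, T.card = q ∧ (⋂ h ∈ T, (h : Set V)).Nonempty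

/-- The covering number `τ(H)`: the minimum cardinality of a set of vertices
meeting every member of `H`. -/
noncomputable def vertexCoverNum {V : Type*} (H : Finset (Set V)) : ℕ :=
  sInf { n : ℕ | ∃ C : Finset V, C.card = n ∧ ∀ h ∈ H, ∃ v ∈ C, v ∈ h }

/-- The fractional covering number `τ*(H)`: the infimum of total weights of
fractional covers of `H`. -/
noncomputable def vertexFracCoverNum {V : Type*} [Fintype V] (H : Finset (Set V)) : ℝ :=
  sInf { t : ℝ | ∃ w : V → ℝ, (∀ v, 0 ≤ w v) ∧
    (∀ h ∈ H, 1 ≤ ∑ v, Set.indicator h w v) ∧ t = ∑ v, w v }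

open Finset
open scoped Classical

namespace SimpleGraph.Preconnected

variable {V : Type*} {G : SimpleGraph V} (hG : G.Preconnected) (r : V)

noncomputable def rootPath (v : V) : G.Walk r v := (hG r v).some.bypass

noncomputable def topIdx (h : Set V) (v : V) : ℕ :=
  sInf {j | ∀ k, j ≤ k → (hG.rootPath r v).getVert k ∈ h}

/-- For `v ∈ h` and `G` acyclic, the vertex of the component of `v` in `G.induce h` nearest
to `r`. -/
noncomputable def top (h : Set V) (v : V) : V :=
  (hG.rootPath r v).getVert (hG.topIdx r h v)

noncomputable def tops [Fintype V] (h : Set V) : Finset V :=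
  {t | ∃ v ∈ h, hG.top r h v = t}

variable {hG r} {h : Set V} {u v w : V}

lemma length_rootPath_mem_topIdx_set (hv : v ∈ h) :
    (hG.rootPath r v).length ∈ {j | ∀ k, j ≤ k → (hG.rootPath r v).getVert k ∈ h} :=
  fun _ hk => (Walk.getVert_of_length_le _ hk).symm ▸ hv

lemma getVert_rootPath_mem (hv : v ∈ h) {k : ℕ} (hk : hG.topIdx r h v ≤ k) :
    (hG.rootPath r v).getVert k ∈ h :=
  Nat.sInf_mem ⟨_, length_rootPath_mem_topIdx_set hv⟩ k hk

lemma topIdx_le_length (hv : v ∈ h) : hG.topIdx r h v ≤ (hG.rootPath r v).length :=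
  Nat.sInf_le (length_rootPath_mem_topIdx_set hv)

lemma rootPath_eq_concat_or (hacyc : G.IsAcyclic) (hadj : G.Adj u w) :
    hG.rootPath r w = (hG.rootPath r u).concat hadj ∨
      hG.rootPath r u = (hG.rootPath r w).concat hadj.symm := by
  have hu : (hG.rootPath r u).IsPath := Walk.bypass_isPath _
  have hw : (hG.rootPath r w).IsPath := Walk.bypass_isPath _
  by_cases huw : u ∈ (hG.rootPath r w).support
  · exact .inl (hacyc.path_concat hu hw hadj huw)
  · exact .inr (hacyc.path_concat hw hu hadj.symm
      (hacyc.mem_support_of_ne_mem_support_of_adj_of_isPath hu hw hadj huw))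

lemma top_eq_of_rootPath_eq_concat (hadj : G.Adj u w)
    (hc : hG.rootPath r w = (hG.rootPath r u).concat hadj) (hu : u ∈ h) (hw : w ∈ h) :
    hG.top r h u = hG.top r h w := by
  have hget : ∀ k ≤ (hG.rootPath r u).length,
      (hG.rootPath r w).getVert k = (hG.rootPath r u).getVert k := fun k hk => by
    rw [hc, Walk.concat_eq_append, Walk.getVert_append', if_pos hk]
  have hmem : ∀ k, (hG.rootPath r w).getVert k ∈ h ↔ (hG.rootPath r u).getVert k ∈ h := by
    intro k
    rcases le_or_gt k (hG.rootPath r u).length with hk | hk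
    · rw [hget k hk]
    · refine iff_of_true ?_ ((Walk.getVert_of_length_le _ hk.le).symm ▸ hu)
      rw [hc, Walk.concat_eq_append, Walk.getVert_append', if_neg hk.not_ge,
        Walk.getVert_of_length_le]
      · exact hw
      · simp only [Walk.length_cons, Walk.length_nil]
        omega
  have hidx : hG.topIdx r h w = hG.topIdx r h u := by
    simp only [topIdx, hmem]
  rw [top, top, hidx, hget _ (topIdx_le_length hu)]

lemma top_eq_of_adj (hacyc : G.IsAcyclic) (hadj : G.Adj u w) (hu : u ∈ h) (hw : w ∈ h) :
    hG.top r h u = hG.top r h w := by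
  rcases rootPath_eq_concat_or hacyc hadj with hc | hc
  · exact top_eq_of_rootPath_eq_concat hadj hc hu hw
  · exact (top_eq_of_rootPath_eq_concat hadj.symm hc hw hu).symm

lemma top_eq_of_reachable (hacyc : G.IsAcyclic) {a b : h} (hab : (G.induce h).Reachable a b) :
    hG.top r h a = hG.top r h b := by
  obtain ⟨p⟩ := hab
  induction p with
  | nil => rfl
  | cons hadj _ ih => exact (top_eq_of_adj hacyc hadj (Subtype.prop _) (Subtype.prop _)).trans ih

lemma card_tops_le [Fintype V] (hacyc : G.IsAcyclic) :
    #(hG.tops r h) ≤ Nat.card (G.induce h).ConnectedComponent := by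
  let F : (G.induce h).ConnectedComponent → V :=
    ConnectedComponent.lift (fun a => hG.top r h a) fun _ _ p _ => top_eq_of_reachable hacyc ⟨p⟩
  have hsurj : Set.SurjOn F Set.univ (hG.tops r h) := by
    intro t ht
    obtain ⟨v, hv, rfl⟩ := by simpa [tops] using ht
    exact ⟨(G.induce h).connectedComponentMk ⟨v, hv⟩, trivial, rfl⟩
  simpa [Nat.card_eq_fintype_card] using
    Finset.card_le_card_of_surjOn F (s := Finset.univ) (by simpa using hsurj)

lemma exists_mem_tops_forall_mem [Fintype V] {ι : Type*} [Finite ι] [Nonempty ι]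
    {f : ι → Set V} (hv : ∀ i, v ∈ f i) : ∃ i, ∃ t ∈ hG.tops r (f i), ∀ j, t ∈ f j := by
  obtain ⟨i, hi⟩ := Finite.exists_max fun i => hG.topIdx r (f i) v
  exact ⟨i, _, by simpa [tops] using ⟨v, hv i, rfl⟩, fun j => getVert_rootPath_mem (hv j) (hi j)⟩

end SimpleGraph.Preconnected

lemma VertexPQProperty.exists_forall_mem {V : Type*} {H : Finset (Set V)} {p : ℕ}
    (hH : VertexPQProperty H p p) (hcard : p ≤ #H) {ι : Type*} [Fintype ι]
    (hι : Fintype.card ι ≤ p) {f : ι → Set V} (hf : ∀ i, f i ∈ H) : ∃ v, ∀ i, v ∈ f i := by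
  obtain ⟨S, hfS, hSH, hS⟩ := Finset.exists_subsuperset_card_eq
    (Finset.image_subset_iff.2 fun i _ => hf i) (Finset.card_image_le.trans hι) hcard
  obtain ⟨T, hTS, hT, v, hv⟩ := hH S hSH hS
  obtain rfl := Finset.eq_of_subset_of_card_le hTS (hS.trans hT.symm).le
  exact ⟨v, fun i => Set.mem_iInter₂.1 hv (f i) (hfS (Finset.mem_image_of_mem f (mem_univ i)))⟩

def IsFracMatching {V : Type*} (H : Finset (Set V)) (y : Set V → ℝ) : Prop :=
  (∀ h ∈ H, 0 ≤ y h) ∧ ∀ v, ∑ h ∈ H with v ∈ h, y h ≤ 1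

section Counting

variable {V : Type*} {H : Finset (Set V)} {y : Set V → ℝ} {p d : ℕ} {T : Set V → Finset V}

noncomputable def witnessBox (H : Finset (Set V)) (T : Set V → Finset V) (i : Fin p) (t : V) :
    Finset (Fin p → Set V) :=
  Fintype.piFinset fun j => if j = i then {h ∈ H | t ∈ T h} else {h ∈ H | t ∈ h}

lemma mem_witnessBox {i : Fin p} {t : V} {f : Fin p → Set V} :
    f ∈ witnessBox H T i t ↔
      ∀ j, f j ∈ if j = i then {h ∈ H | t ∈ T h} else {h ∈ H | t ∈ h} :=
  Fintype.mem_piFinset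

lemma IsFracMatching.sum_witnessBox_le (hy : IsFracMatching H y) (i : Fin p) (t : V) :
    ∑ f ∈ witnessBox H T i t, ∏ j, y (f j) ≤ ∑ h ∈ H with t ∈ T h, y h := by
  rw [witnessBox, ← Finset.prod_univ_sum, ← Finset.mul_prod_erase _ _ (mem_univ i), if_pos rfl]
  refine mul_le_of_le_one_right (Finset.sum_nonneg fun h hh => hy.1 h (mem_filter.1 hh).1)
    (Finset.prod_le_one (fun j _ => ?_) fun j hj => ?_)
  · split_ifs <;> exact Finset.sum_nonneg fun h hh => hy.1 h (mem_filter.1 hh).1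
  · rw [if_neg (Finset.ne_of_mem_erase hj)]
    exact hy.2 t

variable [Fintype V]

lemma sum_pow_le_sum_witnessBox (hy : ∀ h ∈ H, 0 ≤ y h)
    (hwit : ∀ f : Fin p → Set V, (∀ i, f i ∈ H) → ∃ i, ∃ t ∈ T (f i), ∀ j, t ∈ f j) :
    (∑ h ∈ H, y h) ^ p ≤ ∑ c : Fin p × V, ∑ f ∈ witnessBox H T c.1 c.2, ∏ j, y (f j) := by
  set A := Fintype.piFinset fun _ : Fin p => H
  have hbox : ∀ c : Fin p × V, witnessBox H T c.1 c.2 ⊆ A := fun c f hf => by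
    refine Fintype.mem_piFinset.2 fun j => ?_
    have := mem_witnessBox.1 hf j
    split_ifs at this <;> exact (Finset.mem_filter.1 this).1
  have hcover : ∀ f ∈ A, ∏ j, y (f j) ≤
      ∑ c : Fin p × V, if f ∈ witnessBox H T c.1 c.2 then ∏ j, y (f j) else 0 := by
    intro f hf
    have hfH := Fintype.mem_piFinset.1 hf
    obtain ⟨i, t, ht, hft⟩ := hwit f hfH
    have hmem : f ∈ witnessBox H T i t := mem_witnessBox.2 fun j => by
      split_ifs with hj
      · subst hj; exact Finset.mem_filter.2 ⟨hfH j, ht⟩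
      · exact Finset.mem_filter.2 ⟨hfH j, hft j⟩
    have hg : ∀ c : Fin p × V,
        0 ≤ if f ∈ witnessBox H T c.1 c.2 then ∏ j, y (f j) else 0 := fun c => by
      split_ifs
      exacts [Finset.prod_nonneg fun j _ => hy _ (hfH j), le_rfl]
    have := Finset.single_le_sum (fun c _ => hg c) (mem_univ (i, t))
    rwa [if_pos hmem] at this
  calc (∑ h ∈ H, y h) ^ p = ∑ f ∈ A, ∏ j, y (f j) := by
        rw [← Finset.prod_univ_sum, Finset.prod_const, Finset.card_univ, Fintype.card_fin]
    _ ≤ ∑ f ∈ A, ∑ c : Fin p × V, if f ∈ witnessBox H T c.1 c.2 then ∏ j, y (f j) else 0 :=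
        Finset.sum_le_sum hcover
    _ = ∑ c : Fin p × V, ∑ f ∈ witnessBox H T c.1 c.2, ∏ j, y (f j) := by
        rw [Finset.sum_comm]
        refine Finset.sum_congr rfl fun c _ => ?_
        rw [Finset.sum_ite_mem, Finset.inter_eq_right.2 (hbox c)]

lemma sum_sum_filter_mem_le (hy : ∀ h ∈ H, 0 ≤ y h) (hT : ∀ h ∈ H, #(T h) ≤ d) :
    ∑ t, ∑ h ∈ H with t ∈ T h, y h ≤ d * ∑ h ∈ H, y h := by
  simp_rw [Finset.sum_filter]
  rw [Finset.sum_comm, Finset.mul_sum]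
  refine Finset.sum_le_sum fun h hh => ?_
  rw [Finset.sum_ite_mem, Finset.univ_inter, Finset.sum_const, nsmul_eq_mul]
  exact mul_le_mul_of_nonneg_right (by exact_mod_cast hT h hh) (hy h hh)

theorem IsFracMatching.sum_pow_le (hy : IsFracMatching H y) (hT : ∀ h ∈ H, #(T h) ≤ d)
    (hwit : ∀ f : Fin p → Set V, (∀ i, f i ∈ H) → ∃ i, ∃ t ∈ T (f i), ∀ j, t ∈ f j) :
    (∑ h ∈ H, y h) ^ p ≤ p * d * ∑ h ∈ H, y h :=
  calc (∑ h ∈ H, y h) ^ p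
      ≤ ∑ c : Fin p × V, ∑ f ∈ witnessBox H T c.1 c.2, ∏ j, y (f j) :=
        sum_pow_le_sum_witnessBox hy.1 hwit
    _ ≤ ∑ c : Fin p × V, ∑ h ∈ H with c.2 ∈ T h, y h :=
        Finset.sum_le_sum fun c _ => hy.sum_witnessBox_le c.1 c.2
    _ = p * ∑ t, ∑ h ∈ H with t ∈ T h, y h := by
        rw [Fintype.sum_prod_type]
        simp only [Finset.sum_const, Finset.card_univ, Fintype.card_fin, nsmul_eq_mul]
    _ ≤ p * (d * ∑ h ∈ H, y h) := by gcongr; exact sum_sum_filter_mem_le hy.1 hT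
    _ = p * d * ∑ h ∈ H, y h := by ring

end Counting

lemma le_rpow_of_pow_le_mul_self {Y c : ℝ} {p : ℕ} (hY : 0 ≤ Y) (hc : 0 ≤ c) (hp : 1 < p)
    (h : Y ^ p ≤ c * Y) : Y ≤ c ^ (1 / ((p : ℝ) - 1)) := by
  rcases hY.eq_or_lt with rfl | hY
  · positivity
  have hp' : (0 : ℝ) < p - 1 := sub_pos.2 (by exact_mod_cast hp)
  rw [one_div, Real.le_rpow_inv_iff_of_pos hY.le hc hp', Real.rpow_sub_one hY.ne',
    Real.rpow_natCast, div_le_iff₀ hY]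
  exact h

lemma exists_nonpos_separating_stdSimplex_image {ι V : Type*} [Fintype ι] [Fintype V]
    (A : (V → ℝ) →ₗ[ℝ] ι → ℝ) (a : ℝ) (hA : ∀ w ∈ stdSimplex ℝ V, ∃ i, A w i < a) :
    ∃ c : ι → ℝ, (∀ i, c i ≤ 0) ∧
      ∃ β, a * ∑ i, c i < β ∧ ∀ w ∈ stdSimplex ℝ V, β < ∑ i, A w i * c i := by
  have hdisj : Disjoint (Set.univ.pi fun _ => Set.Ici a) (A '' stdSimplex ℝ V) := by
    rw [Set.disjoint_left]
    rintro u hu ⟨w, hw, rfl⟩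
    obtain ⟨i, hi⟩ := hA w hw
    exact hi.not_ge (hu i trivial)
  obtain ⟨φ, α, β, hφs, hαβ, hφK⟩ := geometric_hahn_banach_closed_compact
    (convex_pi fun _ _ => convex_Ici a) (isClosed_set_pi fun _ _ => isClosed_Ici)
    ((convex_stdSimplex ℝ V).linear_image A)
    ((isCompact_stdSimplex ℝ V).image A.continuous_of_finiteDimensional) hdisj
  set c : ι → ℝ := fun i => φ fun j => if i = j then 1 else 0
  have hφ : ∀ u, φ u = ∑ i, u i * c i := fun u => by
    simpa [c, smul_eq_mul] using LinearMap.pi_apply_eq_sum_univ (φ : (ι → ℝ) →ₗ[ℝ] ℝ) u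
  have hconst : (fun _ => a) ∈ Set.univ.pi fun _ : ι => Set.Ici a :=
    fun _ _ => Set.mem_Ici.2 le_rfl
  -- `φ` is bounded above on the orthant, which contains a ray in every coordinate direction.
  have hc : ∀ i, c i ≤ 0 := by
    intro i
    by_contra! hi
    set t := (α - φ fun _ => a) / c i
    have ht : 0 ≤ t := div_nonneg (sub_nonneg.2 (hφs _ hconst).le) hi.le
    have hmem : (fun _ => a) + t • (fun j => if i = j then 1 else 0) ∈
        Set.univ.pi fun _ : ι => Set.Ici a := fun j _ => by
      by_cases hij : i = j <;> simp [hij, ht]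
    have := hφs _ hmem
    rw [map_add, map_smul, smul_eq_mul, div_mul_cancel₀ _ hi.ne'] at this
    linarith
  refine ⟨c, hc, β, ?_, fun w hw => by simpa [hφ] using hφK _ ⟨w, hw, rfl⟩⟩
  have := hφs _ hconst
  rw [hφ, ← Finset.mul_sum] at this
  linarith

section Duality

variable {V : Type*} {H : Finset (Set V)} {x : ℝ}

lemma isFracMatching_div {c : Set V → ℝ} {β : ℝ} (hβ : β < 0) (hc : ∀ h ∈ H, c h ≤ 0)
    (hload : ∀ v, β ≤ ∑ h ∈ H with v ∈ h, c h) : IsFracMatching H fun h => c h / β :=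
  ⟨fun h hh => div_nonneg_of_nonpos (hc h hh) hβ.le, fun v => by
    rw [← Finset.sum_div, div_le_one_of_neg hβ]
    exact hload v⟩

lemma one_le_of_forall_isFracMatching {h₀ : Set V} (hh₀ : h₀ ∈ H)
    (hν : ∀ y, IsFracMatching H y → ∑ h ∈ H, y h ≤ x) : 1 ≤ x := by
  have hy : IsFracMatching H fun h => if h = h₀ then 1 else 0 :=
    ⟨fun h _ => by positivity, fun v => (Finset.sum_le_sum_of_subset_of_nonneg
      (Finset.filter_subset _ _) fun h _ _ => by positivity).trans (by simp [hh₀])⟩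
  simpa [hh₀] using hν _ hy

variable [Fintype V]

noncomputable def incidenceMap (H : Finset (Set V)) : (V → ℝ) →ₗ[ℝ] H → ℝ where
  toFun w h := ∑ v, (h : Set V).indicator w v
  map_add' w w' := by ext h; simp [Set.indicator_add', Finset.sum_add_distrib]
  map_smul' a w := by
    ext h
    exact (Finset.sum_congr rfl fun v _ => Set.indicator_const_smul_apply _ a w v).trans
      Finset.smul_sum.symm

lemma incidenceMap_single (H : Finset (Set V)) (v : V) (h : H) :
    incidenceMap H (Pi.single v 1) h = if v ∈ (h : Set V) then 1 else 0 := by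
  change ∑ u, (h : Set V).indicator (Pi.single v 1) u = _
  rw [Finset.sum_eq_single v (fun u _ hu => by simp [hu]) (by simp)]
  simp [Set.indicator_apply]

lemma vertexFracCoverNum_le_sum {w : V → ℝ} (hw : ∀ v, 0 ≤ w v)
    (hcov : ∀ h ∈ H, 1 ≤ ∑ v, h.indicator w v) : vertexFracCoverNum H ≤ ∑ v, w v :=
  csInf_le ⟨0, by rintro _ ⟨w', hw', -, rfl⟩; exact Finset.sum_nonneg fun v _ => hw' v⟩
    ⟨w, hw, hcov, rfl⟩

lemma exists_mem_stdSimplex_inv_le_incidenceMap [Nonempty V] (hx : 0 < x)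
    (hν : ∀ y, IsFracMatching H y → ∑ h ∈ H, y h ≤ x) :
    ∃ w ∈ stdSimplex ℝ V, ∀ h : H, x⁻¹ ≤ incidenceMap H w h := by
  by_contra! hcon
  obtain ⟨c, hc, β, hβ, hK⟩ := exists_nonpos_separating_stdSimplex_image (incidenceMap H) x⁻¹ hcon
  set c' : Set V → ℝ := fun h => if hh : h ∈ H then c ⟨h, hh⟩ else 0
  have hload : ∀ v, β < ∑ h ∈ H with v ∈ h, c' h := fun v => by
    rw [Finset.sum_filter, ← Finset.sum_coe_sort H]
    simpa [incidenceMap_single, c'] using hK _ (single_mem_stdSimplex ℝ v)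
  have hc' : ∀ h ∈ H, c' h ≤ 0 := fun h hh => by simpa [c', hh] using hc ⟨h, hh⟩
  have hβ0 : β < 0 := (hload (Classical.arbitrary V)).trans_le
    (Finset.sum_nonpos fun h hh => hc' h (Finset.mem_filter.1 hh).1)
  have hν' := hν _ (isFracMatching_div hβ0 hc' fun v => (hload v).le)
  have htot : ∑ h : H, c h = ∑ h ∈ H, c' h := by
    rw [← Finset.sum_coe_sort H]
    simp [c']
  rw [← Finset.sum_div, div_le_iff_of_neg hβ0, ← htot] at hν'
  rw [inv_mul_lt_iff₀ hx] at hβ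
  linarith

theorem vertexFracCoverNum_le_of_forall_isFracMatching [Nonempty V]
    (hν : ∀ y, IsFracMatching H y → ∑ h ∈ H, y h ≤ x) : vertexFracCoverNum H ≤ x := by
  rcases H.eq_empty_or_nonempty with rfl | ⟨h₀, hh₀⟩
  · exact (vertexFracCoverNum_le_sum (w := 0) (fun _ => le_rfl) (by simp)).trans
      (by simpa using hν 0 ⟨by simp, by simp⟩)
  have hx : 0 < x := one_pos.trans_le (one_le_of_forall_isFracMatching hh₀ hν)
  obtain ⟨w, ⟨hw0, hw1⟩, hcov⟩ := exists_mem_stdSimplex_inv_le_incidenceMap hx hν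
  calc vertexFracCoverNum H ≤ ∑ v, (x • w) v :=
        vertexFracCoverNum_le_sum (fun v => mul_nonneg hx.le (hw0 v)) fun h hh =>
          calc (1 : ℝ) = x * x⁻¹ := (mul_inv_cancel₀ hx.ne').symm
            _ ≤ x * incidenceMap H w ⟨h, hh⟩ := mul_le_mul_of_nonneg_left (hcov _) hx.le
            _ = incidenceMap H (x • w) ⟨h, hh⟩ := by rw [map_smul]; rfl
    _ = x := by simp [← Finset.mul_sum, hw1]

end Duality

theorem tree_fracCover_of_pp_property_general {V : Type*} [Fintype V]
    (G : SimpleGraph V) (hG : G.IsTree)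
    (p d : ℕ) (hp : 2 ≤ p)
    (H : Finset (Set V))
    (hcomp : ∀ h ∈ H, Nat.card (G.induce h).ConnectedComponent ≤ d)
    (hcard : p ≤ H.card)
    (hprop : VertexPQProperty H p p) :
    vertexFracCoverNum H < ((p : ℝ) * d) ^ (1 / ((p : ℝ) - 1)) + 1 := by
  have : Nonempty V := hG.connected.nonempty
  have hconn := hG.connected.preconnected
  have hν : ∀ y, IsFracMatching H y → (∑ h ∈ H, y h) ^ p ≤ p * d * ∑ h ∈ H, y h :=
    fun y hy => hy.sum_pow_le (T := hconn.tops (Classical.arbitrary V))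
      (fun h hh => (hconn.card_tops_le hG.isAcyclic).trans (hcomp h hh)) fun f hf => by
        obtain ⟨v, hv⟩ := hprop.exists_forall_mem hcard (by simp) hf
        have : Nonempty (Fin p) := ⟨⟨0, by omega⟩⟩
        exact hconn.exists_mem_tops_forall_mem hv
  calc vertexFracCoverNum H ≤ ((p : ℝ) * d) ^ (1 / ((p : ℝ) - 1)) :=
        vertexFracCoverNum_le_of_forall_isFracMatching fun y hy =>
          le_rpow_of_pow_le_mul_self (Finset.sum_nonneg hy.1) (by positivity) hp (hν y hy)
    _ < _ := lt_add_one _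

theorem tree_fracCover_of_pp_property {V : Type*} [Fintype V]
    (G : SimpleGraph V) (hG : G.IsTree)
    (p d : ℕ) (hp : 2 ≤ p) (hd : 1 ≤ d)
    (H : Finset (Set V)) (hne : ∀ h ∈ H, h.Nonempty)
    (hcomp : ∀ h ∈ H, Nat.card (G.induce h).ConnectedComponent ≤ d)
    (hcard : p ≤ H.card)
    (hprop : VertexPQProperty H p p) :
    vertexFracCoverNum H < ((p : ℝ) * d) ^ (1 / ((p : ℝ) - 1)) + 1 :=
  tree_fracCover_of_pp_property_general G hG p d hp H hcomp hcard hprop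
end
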